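/- For every k ∈ ℕ there exists a constant c > 0 (independent of ξ and f) such that: for every compactly supported function f : ℝ → ℂ of class C^k and every ξ > 0, there exists a continuous, integrable function ψ : ℝ → ℂ such that the Fourier transform ψ̂ is supported in [-ξ, ξ], ‖ψ̂‖_∞ ≤ c, and ‖f − f ∗ ψ‖_∞ ≤ c · ‖f‖_{C^k} · ξ^{−k}. -/

import Mathlib

open MeasureTheory FourierTransform

/-!
Let `χ` be a smooth bump equal to `1` on `[-1/2, 1/2]` and supported in `[-1, 1]`, let `K` be its
inverse Fourier transform and `ψ y = ξ K (ξ y)`, so that `𝓕 ψ = χ (· / ξ)`. As `𝓕 ψ` is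
identically `1` near `0`, `ψ` has integral `1` and its moments of orders `1, …, k - 1` vanish.
Expanding `f (x - y)` in its Taylor polynomial of degree `k - 1` at `x`, the polynomial part of
`f ∗ ψ` is exactly `f x`, while the remainder is at most `‖f⁽ᵏ⁾‖_∞ |y|ᵏ / (k - 1)!`, and
`∫ |y|ᵏ ‖ψ y‖ = ξ⁻ᵏ ∫ |u|ᵏ ‖K u‖`. For `k = 0` one takes `ψ = 0`.
-/

open Real Complex Filter Topology
open scoped Nat SchwartzMap

section Taylor

variable {E : Type*} [NormedAddCommGroup E] [NormedSpace ℝ E]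

theorem norm_sub_taylor_le_of_nonneg {n : ℕ} {f : ℝ → E} (hf : ContDiff ℝ (n + 1) f) {D : ℝ}
    (hD : ∀ s, ‖iteratedDeriv (n + 1) f s‖ ≤ D) (x : ℝ) {y : ℝ} (hy : 0 ≤ y) :
    ‖f (x + y) - ∑ j ∈ Finset.range (n + 1), ((j ! : ℝ)⁻¹ * y ^ j) • iteratedDeriv j f x‖
      ≤ D * |y| ^ (n + 1) / n ! := by
  -- the right endpoint `x + y + 1` keeps the interval nondegenerate when `y = 0`
  have hlt : x < x + y + 1 := by linarith
  have hderiv (j : ℕ) (hj : j ≤ n + 1) {z : ℝ} (hz : z ∈ Set.Icc x (x + y + 1)) :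
      iteratedDerivWithin j f (Set.Icc x (x + y + 1)) z = iteratedDeriv j f z :=
    iteratedDerivWithin_eq_iteratedDeriv (uniqueDiffOn_Icc hlt)
      (hf.of_le (by exact_mod_cast hj)).contDiffAt hz
  have h := taylor_mean_remainder_bound hlt.le hf.contDiffOn
    (⟨by linarith, by linarith⟩ : x + y ∈ Set.Icc x (x + y + 1))
    (fun z hz => by rw [hderiv (n + 1) le_rfl hz]; exact hD z)
  rw [taylor_within_apply, add_sub_cancel_left] at h
  rw [abs_of_nonneg hy]
  convert h using 4 with j hj
  rw [hderiv j (by have := Finset.mem_range.1 hj; omega) (Set.left_mem_Icc.2 hlt.le)]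

theorem norm_sub_taylor_le {n : ℕ} {f : ℝ → E} (hf : ContDiff ℝ (n + 1) f) {D : ℝ}
    (hD : ∀ s, ‖iteratedDeriv (n + 1) f s‖ ≤ D) (x y : ℝ) :
    ‖f (x + y) - ∑ j ∈ Finset.range (n + 1), ((j ! : ℝ)⁻¹ * y ^ j) • iteratedDeriv j f x‖
      ≤ D * |y| ^ (n + 1) / n ! := by
  rcases le_total 0 y with hy | hy
  · exact norm_sub_taylor_le_of_nonneg hf hD x hy
  have hderiv (j : ℕ) (a : ℝ) :
      iteratedDeriv j (fun t => f (-t)) a = (-1 : ℝ) ^ j • iteratedDeriv j f (-a) :=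
    iteratedDeriv_comp_neg j f a
  have h := norm_sub_taylor_le_of_nonneg (f := fun t => f (-t)) (hf.comp contDiff_neg)
    (fun s => by simpa [hderiv, norm_smul] using hD (-s)) (-x) (neg_nonneg.2 hy)
  simp only [hderiv, neg_add_rev, neg_neg, abs_neg, smul_smul] at h
  convert h using 4 with j
  · rw [add_comm]
  · rw [mul_assoc, ← mul_pow, neg_mul_neg, mul_one]

end Taylor

theorem HasCompactSupport.iteratedDeriv {E : Type*} [NormedAddCommGroup E] [NormedSpace ℝ E]
    {f : ℝ → E} (hf : HasCompactSupport f) (n : ℕ) : HasCompactSupport (iteratedDeriv n f) :=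
  (hf.iteratedFDeriv (𝕜 := ℝ) n).comp_left
    (g := fun L : ContinuousMultilinearMap ℝ (fun _ : Fin n => ℝ) E => L fun _ => 1) rfl

theorem norm_iteratedDeriv_le_sum_iSup {E : Type*} [NormedAddCommGroup E] [NormedSpace ℝ E]
    {k : ℕ} {f : ℝ → E} (hf : ContDiff ℝ k f) (hfs : HasCompactSupport f) {i : ℕ} (hi : i ≤ k)
    (s : ℝ) : ‖iteratedDeriv i f s‖ ≤ ∑ j ∈ Finset.range (k + 1), ⨆ s, ‖iteratedDeriv j f s‖ := by
  have hbdd : BddAbove (Set.range fun s => ‖iteratedDeriv i f s‖) :=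
    (hf.continuous_iteratedDeriv i (by exact_mod_cast hi)).norm.bddAbove_range_of_hasCompactSupport
      (hfs.iteratedDeriv i).norm
  calc ‖iteratedDeriv i f s‖ ≤ ⨆ s, ‖iteratedDeriv i f s‖ := le_ciSup hbdd s
    _ ≤ _ := Finset.single_le_sum (f := fun j => ⨆ s, ‖iteratedDeriv j f s‖)
        (fun j _ => Real.iSup_nonneg fun _ => norm_nonneg _) (Finset.mem_range.2 (by omega))

section VanishingMoments

variable {n : ℕ} {ψ : ℝ → ℂ}

theorem sum_pow_mul_eq_sum_mul_pow_smul (c : ℕ → ℂ) (y : ℝ) :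
    (∑ j ∈ Finset.range (n + 1), c j * (y : ℂ) ^ j) * ψ y =
      ∑ j ∈ Finset.range (n + 1), c j * (y ^ j • ψ y) := by
  simp only [Finset.sum_mul, mul_assoc, real_smul, ofReal_pow]

variable (hψ_int : ∀ j ≤ n, Integrable fun y : ℝ => y ^ j • ψ y)
include hψ_int

theorem integrable_sum_pow_mul (c : ℕ → ℂ) :
    Integrable fun y : ℝ => (∑ j ∈ Finset.range (n + 1), c j * (y : ℂ) ^ j) * ψ y := by
  simp only [sum_pow_mul_eq_sum_mul_pow_smul]
  exact integrable_finsetSum _ fun j hj => (hψ_int j (Finset.mem_range_succ_iff.1 hj)).const_mul _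

theorem integral_sum_pow_mul (hψ_one : ∫ y, ψ y = 1)
    (hψ_mom : ∀ j, j ≠ 0 → j ≤ n → ∫ y, y ^ j • ψ y = 0) (c : ℕ → ℂ) :
    ∫ y : ℝ, (∑ j ∈ Finset.range (n + 1), c j * (y : ℂ) ^ j) * ψ y = c 0 := by
  simp only [sum_pow_mul_eq_sum_mul_pow_smul]
  rw [integral_finsetSum _ fun j hj => (hψ_int j (Finset.mem_range_succ_iff.1 hj)).const_mul _,
    Finset.sum_eq_single 0]
  · simp [integral_const_mul, hψ_one]
  · intro j hj hj0
    rw [integral_const_mul, hψ_mom j hj0 (Finset.mem_range_succ_iff.1 hj), mul_zero]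
  · simp

end VanishingMoments

theorem norm_sub_integral_mul_le {n : ℕ} {f : ℝ → ℂ} (hf : ContDiff ℝ (n + 1) f) {D : ℝ}
    (hD : ∀ s, ‖iteratedDeriv (n + 1) f s‖ ≤ D) {ψ : ℝ → ℂ}
    (hψ_int : ∀ j ≤ n + 1, Integrable fun y : ℝ => y ^ j • ψ y) (hψ_one : ∫ y, ψ y = 1)
    (hψ_mom : ∀ j, j ≠ 0 → j ≤ n → ∫ y, y ^ j • ψ y = 0) (x : ℝ) :
    ‖f x - ∫ y, f (x - y) * ψ y‖ ≤ D / n ! * ∫ y, ‖y ^ (n + 1) • ψ y‖ := by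
  set c : ℕ → ℂ := fun j => (j ! : ℂ)⁻¹ * (-1) ^ j * iteratedDeriv j f x
  set P : ℝ → ℂ := fun y => ∑ j ∈ Finset.range (n + 1), c j * (y : ℂ) ^ j
  have hψ_int' (j : ℕ) (hj : j ≤ n) := hψ_int j (hj.trans n.le_succ)
  have hRψ_le (y : ℝ) : ‖(f (x - y) - P y) * ψ y‖ ≤ D / n ! * ‖y ^ (n + 1) • ψ y‖ := by
    have hP : P y = ∑ j ∈ Finset.range (n + 1), ((j ! : ℝ)⁻¹ * (-y) ^ j) • iteratedDeriv j f x :=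
      Finset.sum_congr rfl fun j _ => by
        simp only [c, ← coe_smul, smul_eq_mul, neg_pow y]
        push_cast
        ring
    have hR : ‖f (x - y) - P y‖ ≤ D * |y| ^ (n + 1) / n ! := by
      rw [hP, sub_eq_add_neg x y, ← abs_neg y]
      exact norm_sub_taylor_le hf hD x (-y)
    rw [norm_mul, norm_smul, norm_pow, Real.norm_eq_abs]
    calc _ ≤ D * |y| ^ (n + 1) / n ! * ‖ψ y‖ := by gcongr
      _ = _ := by ring
  have hRψ_int : Integrable fun y => (f (x - y) - P y) * ψ y := by
    have hψ_meas : AEStronglyMeasurable ψ := by simpa using (hψ_int 0 (Nat.zero_le _)).1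
    have hP_cont : Continuous P := by fun_prop
    exact ((hψ_int (n + 1) le_rfl).norm.const_mul _).mono'
      (((hf.continuous.comp (continuous_sub_left x)).sub hP_cont).aestronglyMeasurable.mul
        hψ_meas) (ae_of_all _ hRψ_le)
  have hsplit : ∫ y, f (x - y) * ψ y = (∫ y, (f (x - y) - P y) * ψ y) + f x := by
    have hPψ : ∫ y, P y * ψ y = f x := by
      simpa [c] using integral_sum_pow_mul hψ_int' hψ_one hψ_mom c
    rw [← hPψ, ← integral_add hRψ_int (integrable_sum_pow_mul hψ_int' c)]
    simp only [P, sub_mul, sub_add_cancel]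
  calc ‖f x - ∫ y, f (x - y) * ψ y‖ = ‖∫ y, (f (x - y) - P y) * ψ y‖ := by
        rw [hsplit, sub_add_cancel_right, norm_neg]
    _ ≤ ∫ y, D / n ! * ‖y ^ (n + 1) • ψ y‖ :=
        norm_integral_le_of_norm_le ((hψ_int (n + 1) le_rfl).norm.const_mul _)
          (ae_of_all _ hRψ_le)
    _ = D / n ! * ∫ y, ‖y ^ (n + 1) • ψ y‖ := integral_const_mul _ _

section Moments

variable {E : Type*} [NormedAddCommGroup E] [NormedSpace ℂ E]

theorem fourier_apply_zero (g : ℝ → E) : 𝓕 g 0 = ∫ x, g x := by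
  simp [Real.fourier_real_eq]

theorem iteratedDeriv_fourier_zero {g : ℝ → E} (hg : ∀ n : ℕ, Integrable fun x : ℝ => x ^ n • g x)
    (j : ℕ) : iteratedDeriv j (𝓕 g) 0 = (-2 * π * I) ^ j • ∫ x, x ^ j • g x := by
  rw [Real.iteratedDeriv_fourier (N := ⊤) (fun n _ => hg n) le_top, fourier_apply_zero,
    ← integral_smul]
  congr 1 with x
  rw [mul_pow, mul_smul, ← ofReal_pow, coe_smul]

theorem integral_pow_smul_eq_zero_of_fourier_eventuallyEq_const {g : ℝ → E}
    (hg : ∀ n : ℕ, Integrable fun x : ℝ => x ^ n • g x) {c : E}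
    (hc : 𝓕 g =ᶠ[𝓝 0] fun _ => c) {j : ℕ} (hj : j ≠ 0) :
    ∫ x, x ^ j • g x = 0 := by
  have h := iteratedDeriv_fourier_zero hg j
  rw [hc.iteratedDeriv_eq, iteratedDeriv_const, if_neg hj, eq_comm, smul_eq_zero] at h
  exact h.resolve_left (pow_ne_zero _ (by simp [Real.pi_ne_zero, I_ne_zero]))

end Moments

section Dilation

variable {E : Type*} [NormedAddCommGroup E] [NormedSpace ℝ E]

def dilation (ξ : ℝ) (g : ℝ → E) (y : ℝ) : E := ξ • g (ξ * y)

theorem pow_smul_dilation {ξ : ℝ} (hξ : ξ ≠ 0) (m : ℕ) (g : ℝ → E) (y : ℝ) :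
    y ^ m • dilation ξ g y = (ξ ^ m)⁻¹ • dilation ξ (fun u => u ^ m • g u) y := by
  simp only [dilation, smul_smul, mul_pow]
  congr 1
  field_simp

theorem MeasureTheory.Integrable.dilation {g : ℝ → E} (hg : Integrable g) {ξ : ℝ} (hξ : ξ ≠ 0) :
    Integrable (dilation ξ g) :=
  (hg.comp_mul_left' hξ).smul ξ

theorem integrable_pow_smul_dilation {g : ℝ → E}
    (hg : ∀ m : ℕ, Integrable fun u : ℝ => u ^ m • g u) {ξ : ℝ} (hξ : ξ ≠ 0) (m : ℕ) :
    Integrable fun y : ℝ => y ^ m • dilation ξ g y := by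
  simp only [pow_smul_dilation hξ]
  exact ((hg m).dilation hξ).smul _

theorem integral_norm_dilation {ξ : ℝ} (hξ : 0 < ξ) (g : ℝ → E) :
    ∫ y, ‖dilation ξ g y‖ = ∫ u, ‖g u‖ := by
  simp only [dilation, norm_smul, Real.norm_of_nonneg hξ.le]
  rw [integral_const_mul, Measure.integral_comp_mul_left (fun u => ‖g u‖), smul_eq_mul,
    abs_of_pos (inv_pos.2 hξ), mul_inv_cancel_left₀ hξ.ne']

theorem integral_norm_pow_smul_dilation {ξ : ℝ} (hξ : 0 < ξ) (m : ℕ) (g : ℝ → E) :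
    ∫ y, ‖y ^ m • dilation ξ g y‖ = (ξ ^ m)⁻¹ * ∫ u, ‖u ^ m • g u‖ := by
  simp only [pow_smul_dilation hξ.ne', norm_smul (ξ ^ m)⁻¹,
    Real.norm_of_nonneg (inv_pos.2 (pow_pos hξ m)).le]
  rw [integral_const_mul, integral_norm_dilation hξ]

theorem fourier_dilation {F : Type*} [NormedAddCommGroup F] [NormedSpace ℂ F] {ξ : ℝ}
    (hξ : 0 < ξ) (g : ℝ → F) (t : ℝ) : 𝓕 (dilation ξ g) t = 𝓕 g (t / ξ) := by
  have h (v : ℝ) :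
      𝐞 (-(v * t)) • dilation ξ g v = ξ • (fun u => 𝐞 (-(u * (t / ξ))) • g u) (ξ * v) := by
    have : ξ * v * (t / ξ) = v * t := by field_simp
    simp only [dilation, this, smul_comm ξ]
  simp only [Real.fourier_real_eq, h]
  rw [integral_smul, Measure.integral_comp_mul_left (fun u => 𝐞 (-(u * (t / ξ))) • g u),
    abs_of_pos (inv_pos.2 hξ), smul_smul, mul_inv_cancel₀ hξ.ne', one_smul]

end Dilation

theorem SchwartzMap.integrable_pow_smul {E : Type*} [NormedAddCommGroup E] [NormedSpace ℝ E]
    (g : 𝓢(ℝ, E)) (m : ℕ) : Integrable fun x : ℝ => x ^ m • g x :=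
  (g.integrable_pow_mul volume m).mono' (by fun_prop) (ae_of_all _ fun x => by simp [norm_smul])

noncomputable def cutoff : ContDiffBump (0 : ℝ) := ⟨1 / 2, 1, by norm_num, by norm_num⟩

noncomputable def kernel : 𝓢(ℝ, ℂ) :=
  𝓕⁻ ((cutoff.hasCompactSupport.comp_left ofReal_zero).toSchwartzMap
    (ofRealCLM.contDiff.comp cutoff.contDiff))

theorem fourier_kernel : 𝓕 (kernel : ℝ → ℂ) = fun t => (cutoff t : ℂ) := by
  rw [← SchwartzMap.fourier_coe, kernel, FourierInvPair.fourier_fourierInv_eq]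
  rfl

section DilatedKernel

variable {ξ : ℝ} (hξ : 0 < ξ)
include hξ

theorem fourier_dilation_kernel (t : ℝ) : 𝓕 (dilation ξ ⇑kernel) t = cutoff (t / ξ) := by
  rw [fourier_dilation hξ, fourier_kernel]

theorem fourier_dilation_kernel_eventuallyEq_one :
    𝓕 (dilation ξ ⇑kernel) =ᶠ[𝓝 0] fun _ => 1 := by
  have h : Tendsto (· / ξ) (𝓝 0) (𝓝 0) := by
    simpa using (continuous_id.div_const ξ).tendsto 0
  filter_upwards [h.eventually cutoff.eventuallyEq_one] with t ht
  simp [fourier_dilation_kernel hξ, ht]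

theorem integral_dilation_kernel : ∫ y, dilation ξ ⇑kernel y = 1 := by
  rw [← fourier_apply_zero, fourier_dilation_kernel hξ, zero_div, cutoff.one_of_mem_closedBall,
    ofReal_one]
  simp [cutoff]

theorem support_fourier_dilation_kernel :
    Function.support (𝓕 (dilation ξ ⇑kernel)) ⊆ Set.Icc (-ξ) ξ := by
  intro t ht
  rw [Function.mem_support, fourier_dilation_kernel hξ, ofReal_ne_zero, ← Function.mem_support,
    cutoff.support_eq, Metric.mem_ball, dist_zero_right, norm_div, Real.norm_of_nonneg hξ.le,
    Real.norm_eq_abs] at ht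
  exact abs_le.1 ((div_lt_one hξ).1 ht).le

theorem norm_fourier_dilation_kernel_le (t : ℝ) : ‖𝓕 (dilation ξ ⇑kernel) t‖ ≤ 1 := by
  rw [fourier_dilation_kernel hξ, norm_real, Real.norm_of_nonneg cutoff.nonneg]
  exact cutoff.le_one

end DilatedKernel

theorem stmt_0 (k : ℕ) :
    ∃ c > (0 : ℝ), ∀ f : ℝ → ℂ, ContDiff ℝ k f → HasCompactSupport f →
      ∀ ξ : ℝ, 0 < ξ →
        ∃ ψ : ℝ → ℂ, Continuous ψ ∧ Integrable ψ ∧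
          Function.support (𝓕 ψ) ⊆ Set.Icc (-ξ) ξ ∧
          (∀ t : ℝ, ‖𝓕 ψ t‖ ≤ c) ∧
          (∀ x : ℝ, ‖f x - ∫ y : ℝ, f (x - y) * ψ y‖ ≤
            c * (∑ i ∈ Finset.range (k + 1), ⨆ s : ℝ, ‖iteratedDeriv i f s‖)
              * ξ ^ (-(k : ℝ))) := by
  cases k with
  | zero =>
    have h𝓕 : 𝓕 (fun _ : ℝ => (0 : ℂ)) = 0 := by ext t; simp [Real.fourier_real_eq]
    refine ⟨1, one_pos, fun f hf hfs ξ _ => ⟨fun _ => 0, continuous_const, integrable_zero _ _ _,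
      by simp [h𝓕], by simp [h𝓕], fun x => ?_⟩⟩
    simpa using norm_iteratedDeriv_le_sum_iSup hf hfs le_rfl x
  | succ n =>
    set M := ∫ u, ‖u ^ (n + 1) • kernel u‖
    refine ⟨max 1 (M / n !), by positivity, fun f hf hfs ξ hξ => ⟨dilation ξ ⇑kernel,
      by unfold dilation; fun_prop, kernel.integrable.dilation hξ.ne',
      support_fourier_dilation_kernel hξ,
      fun t => (norm_fourier_dilation_kernel_le hξ t).trans (le_max_left _ _), fun x => ?_⟩⟩
    set S := ∑ i ∈ Finset.range (n + 1 + 1), ⨆ s : ℝ, ‖iteratedDeriv i f s‖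
    have hmom := integrable_pow_smul_dilation kernel.integrable_pow_smul hξ.ne'
    calc _ ≤ S / n ! * ∫ y, ‖y ^ (n + 1) • dilation ξ (⇑kernel) y‖ :=
          norm_sub_integral_mul_le (by exact_mod_cast hf)
            (norm_iteratedDeriv_le_sum_iSup hf hfs le_rfl) (fun j _ => hmom j)
            (integral_dilation_kernel hξ) (fun j hj _ =>
              integral_pow_smul_eq_zero_of_fourier_eventuallyEq_const hmom
                (fourier_dilation_kernel_eventuallyEq_one hξ) hj) x
      _ = M / n ! * S * (ξ ^ (n + 1))⁻¹ := by
          rw [integral_norm_pow_smul_dilation hξ]; ring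
      _ ≤ _ := by
          rw [rpow_neg hξ.le, rpow_natCast]
          have hS : 0 ≤ S := (norm_nonneg _).trans (norm_iteratedDeriv_le_sum_iSup hf hfs le_rfl 0)
          gcongr
          exact le_max_right _ _
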